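/- arXiv:1710.08818 — 3 statements merged into one kernel-verified Lean document; each statement's English description precedes it below -/
import Mathlib

section
/- Let X be a discrete random variable taking values in [a,b] ⊂ ℝ with mean E(X) = x and finite variance σ²(X), and let f : [a,b] → ℝ be continuously differentiable. Then for any δ > 0, |E f(X) − f(x)| ≤ ω₁(δ)(σ²(X)/δ + σ(X)), where ω₁ is the modulus of continuity of f′ on [a,b]. -/
/-- Generalized rising factorial with increment `h`: `x^(m,h) = x(x+h)···(x+(m-1)h)`. -/
noncomputable def rfac (x h : ℝ) (m : ℕ) : ℝ := ∏ i ∈ Finset.range m, (x + i * h)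

/-- Pólya urn probability `p_{n,k}^{a,b,c}`. -/
noncomputable def polyaProb (a b c : ℝ) (n k : ℕ) : ℝ :=
  (n.choose k : ℝ) * rfac a c k * rfac b c (n - k) / rfac (a + b) c n

/-- The operator `R_n(f;x)` with `c = -min{x,1-x}/(n-1)`. -/
noncomputable def Rop (n : ℕ) (f : ℝ → ℝ) (x : ℝ) : ℝ :=
  ∑ k ∈ Finset.range (n + 1),
    polyaProb x (1 - x) (-(min x (1 - x)) / ((n : ℝ) - 1)) n k * f ((k : ℝ) / n)

/-- Modulus of continuity of `f` on `[a,b]`. -/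
noncomputable def modulus (f : ℝ → ℝ) (a b δ : ℝ) : ℝ :=
  sSup {d : ℝ | ∃ u ∈ Set.Icc a b, ∃ v ∈ Set.Icc a b, |u - v| ≤ δ ∧ d = |f u - f v|}

/-!
Subtracting the tangent at the mean, `E f(X) - f(x) = E[f(X) - f(x) - f'(x)(X - x)]`. By the mean
value theorem the remainder at `u` is at most `|u - x|` times the oscillation of `f'` on the
segment between `x` and `u`, and splitting that segment into `⌈|u - x|/δ⌉` pieces of length `≤ δ`
bounds this oscillation by `(1 + |u - x|/δ) ω₁(δ)`. Taking expectations gives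
`ω₁(δ) (E|X - x| + σ²/δ)`, and `E|X - x| ≤ σ` by Jensen's inequality for the square root.
-/

open Set Finset

section Modulus

variable {g : ℝ → ℝ} {a b δ u v : ℝ}

theorem modulus_nonneg (g : ℝ → ℝ) (a b δ : ℝ) : 0 ≤ modulus g a b δ :=
  Real.sSup_nonneg fun _ ⟨_, _, _, _, _, hd⟩ => hd ▸ abs_nonneg _

theorem bddAbove_modulus_set (hg : ContinuousOn g (Icc a b)) :
    BddAbove {d : ℝ | ∃ u ∈ Icc a b, ∃ v ∈ Icc a b, |u - v| ≤ δ ∧ d = |g u - g v|} := by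
  obtain ⟨C, hC⟩ := isCompact_Icc.exists_bound_of_continuousOn hg
  refine ⟨C + C, ?_⟩
  rintro _ ⟨u, hu, v, hv, -, rfl⟩
  exact (abs_sub _ _).trans (add_le_add (hC u hu) (hC v hv))

theorem abs_sub_le_modulus (hg : ContinuousOn g (Icc a b)) (hu : u ∈ Icc a b)
    (hv : v ∈ Icc a b) (huv : |u - v| ≤ δ) : |g u - g v| ≤ modulus g a b δ :=
  le_csSup (bddAbove_modulus_set hg) ⟨u, hu, v, hv, huv, rfl⟩

theorem abs_sub_le_nat_mul_modulus (hg : ContinuousOn g (Icc a b)) (n : ℕ) (hu : u ∈ Icc a b)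
    (hv : v ∈ Icc a b) (huv : |u - v| ≤ n * δ) : |g u - g v| ≤ n * modulus g a b δ := by
  induction n generalizing u with
  | zero =>
    obtain rfl : u = v := sub_eq_zero.1 (abs_nonpos_iff.1 (by simpa using huv))
    simp
  | succ n ih =>
    have hn : (0 : ℝ) < n + 1 := by positivity
    set w := u + (1 / (n + 1) : ℝ) • (v - u)
    have hw : w ∈ Icc a b :=
      (convex_Icc a b).add_smul_sub_mem hu hv ⟨by positivity, by rw [div_le_one hn]; linarith⟩
    have huw : |u - w| ≤ δ := by
      rw [show u - w = (u - v) / (n + 1) by simp only [w, smul_eq_mul]; field_simp; ring,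
        abs_div, abs_of_pos hn, div_le_iff₀ hn]
      push_cast at huv
      linarith
    have hwv : |w - v| ≤ n * δ := by
      rw [show w - v = (u - v) * (n / (n + 1)) by simp only [w, smul_eq_mul]; field_simp; ring,
        abs_mul, abs_of_nonneg (by positivity : (0 : ℝ) ≤ n / (n + 1))]
      push_cast at huv
      calc |u - v| * (n / (n + 1)) ≤ (n + 1) * δ * (n / (n + 1)) := by gcongr
        _ = n * δ := by field_simp
    calc |g u - g v| ≤ |g u - g w| + |g w - g v| := abs_sub_le _ _ _
      _ ≤ modulus g a b δ + n * modulus g a b δ :=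
        add_le_add (abs_sub_le_modulus hg hu hw huw) (ih hw hwv)
      _ = (n + 1 : ℕ) * modulus g a b δ := by push_cast; ring

theorem abs_sub_le_one_add_div_mul_modulus (hg : ContinuousOn g (Icc a b)) (hδ : 0 < δ)
    (hu : u ∈ Icc a b) (hv : v ∈ Icc a b) :
    |g u - g v| ≤ (1 + |u - v| / δ) * modulus g a b δ := by
  have hn := Nat.ceil_lt_add_one (div_nonneg (abs_nonneg (u - v)) hδ.le)
  calc |g u - g v| ≤ ⌈|u - v| / δ⌉₊ * modulus g a b δ :=
        abs_sub_le_nat_mul_modulus hg _ hu hv ((div_le_iff₀ hδ).1 (Nat.le_ceil _))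
    _ ≤ (1 + |u - v| / δ) * modulus g a b δ := by
        gcongr
        · exact modulus_nonneg g a b δ
        · linarith

end Modulus

theorem abs_sub_sub_deriv_mul_le {f f' : ℝ → ℝ} {x u C : ℝ}
    (hf : ∀ t ∈ uIcc x u, HasDerivAt f (f' t) t) (hC : ∀ t ∈ uIcc x u, |f' t - f' x| ≤ C) :
    |f u - f x - f' x * (u - x)| ≤ C * |u - x| := by
  have hg : ∀ t ∈ uIcc x u,
      HasDerivWithinAt (fun s => f s - f' x * s) (f' t - f' x) (uIcc x u) t := fun t ht =>
    ((hf t ht).sub (((hasDerivAt_id t).const_mul (f' x)).congr_deriv (mul_one _))).hasDerivWithinAt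
  have := (convex_uIcc x u).norm_image_sub_le_of_norm_hasDerivWithin_le hg hC
    left_mem_uIcc right_mem_uIcc
  simp only [Real.norm_eq_abs] at this
  convert this using 2
  ring

theorem abs_sub_sub_deriv_mul_le_modulus {f f' : ℝ → ℝ} {a b δ x u : ℝ}
    (hf : ∀ t ∈ Icc a b, HasDerivAt f (f' t) t) (hf' : ContinuousOn f' (Icc a b)) (hδ : 0 < δ)
    (hx : x ∈ Icc a b) (hu : u ∈ Icc a b) :
    |f u - f x - f' x * (u - x)| ≤ modulus f' a b δ * (|u - x| + (u - x) ^ 2 / δ) := by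
  have hsub : uIcc x u ⊆ Icc a b := uIcc_subset_Icc hx hu
  calc |f u - f x - f' x * (u - x)| ≤ (1 + |u - x| / δ) * modulus f' a b δ * |u - x| := by
        refine abs_sub_sub_deriv_mul_le (fun t ht => hf t (hsub ht)) fun t ht => ?_
        refine (abs_sub_le_one_add_div_mul_modulus hf' hδ (hsub ht) hx).trans ?_
        have := abs_sub_left_of_mem_uIcc ht
        have := modulus_nonneg f' a b δ
        gcongr (1 + ?_ / δ) * _
    _ = modulus f' a b δ * (|u - x| + (u - x) ^ 2 / δ) := by
        rw [← sq_abs (u - x)]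
        field_simp

section WeightedSums

variable {ι : Type*} (s : Finset ι) {p y : ι → ℝ}

theorem sum_mul_abs_le_sqrt_sum_mul_sq (hp : ∀ i ∈ s, 0 ≤ p i) (hpsum : ∑ i ∈ s, p i = 1)
    (z : ι → ℝ) : ∑ i ∈ s, p i * |z i| ≤ √(∑ i ∈ s, p i * z i ^ 2) := by
  simpa [Real.sqrt_sq_eq_abs] using
    Real.strictConcaveOn_sqrt.concaveOn.le_map_sum hp hpsum fun i _ => sq_nonneg (z i)

theorem sum_mul_sub_eq_sum_mul_sub_sub_mul (hpsum : ∑ i ∈ s, p i = 1)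
    {x : ℝ} (hx : ∑ i ∈ s, p i * y i = x) (f : ℝ → ℝ) (c : ℝ) :
    ∑ i ∈ s, p i * f (y i) - f x = ∑ i ∈ s, p i * (f (y i) - f x - c * (y i - x)) := by
  simp only [mul_sub, Finset.sum_sub_distrib, ← Finset.sum_mul, mul_left_comm (p _) c,
    ← Finset.mul_sum, hpsum, hx]
  ring

end WeightedSums

theorem discrete_modulus_deriv_estimate_general (a b : ℝ) (m : ℕ)
    (y : Fin m → ℝ) (p : Fin m → ℝ)
    (hy : ∀ i, y i ∈ Set.Icc a b) (hp : ∀ i, 0 ≤ p i) (hpsum : ∑ i, p i = 1)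
    (x : ℝ) (hx : ∑ i, p i * y i = x)
    (f f' : ℝ → ℝ)
    (hf : ∀ t ∈ Set.Icc a b, HasDerivAt f (f' t) t)
    (hf' : ContinuousOn f' (Set.Icc a b))
    (δ : ℝ) (hδ : 0 < δ) :
    |(∑ i, p i * f (y i)) - f x| ≤
      modulus f' a b δ *
        ((∑ i, p i * (y i - x) ^ 2) / δ + Real.sqrt (∑ i, p i * (y i - x) ^ 2)) := by
  have hx_mem : x ∈ Icc a b :=
    hx ▸ (convex_Icc a b).sum_mem (fun i _ => hp i) hpsum fun i _ => hy i
  set ω := modulus f' a b δ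
  set V := ∑ i, p i * (y i - x) ^ 2
  calc |(∑ i, p i * f (y i)) - f x|
      = |∑ i, p i * (f (y i) - f x - f' x * (y i - x))| := by
        rw [sum_mul_sub_eq_sum_mul_sub_sub_mul _ hpsum hx]
    _ ≤ ∑ i, p i * |f (y i) - f x - f' x * (y i - x)| :=
        (abs_sum_le_sum_abs _ _).trans_eq <| sum_congr rfl fun i _ => by
          rw [abs_mul, abs_of_nonneg (hp i)]
    _ ≤ ∑ i, p i * (ω * (|y i - x| + (y i - x) ^ 2 / δ)) := by
        gcongr with i
        · exact hp i
        · exact abs_sub_sub_deriv_mul_le_modulus hf hf' hδ hx_mem (hy i)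
    _ = ω * (V / δ + ∑ i, p i * |y i - x|) := by
        rw [add_comm (V / δ)]
        simp only [V, Finset.sum_div, mul_add, Finset.mul_sum, Finset.sum_add_distrib]
        congr 1 <;> exact sum_congr rfl fun i _ => by ring
    _ ≤ ω * (V / δ + √V) := by
        have hω : 0 ≤ ω := modulus_nonneg f' a b δ
        gcongr
        exact sum_mul_abs_le_sqrt_sum_mul_sq univ (fun i _ => hp i) hpsum (fun i => y i - x)

theorem discrete_modulus_deriv_estimate (a b : ℝ) (hab : a ≤ b) (m : ℕ)
    (y : Fin m → ℝ) (p : Fin m → ℝ)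
    (hy : ∀ i, y i ∈ Set.Icc a b) (hp : ∀ i, 0 ≤ p i) (hpsum : ∑ i, p i = 1)
    (x : ℝ) (hx : ∑ i, p i * y i = x)
    (f f' : ℝ → ℝ)
    (hf : ∀ t ∈ Set.Icc a b, HasDerivAt f (f' t) t)
    (hf' : ContinuousOn f' (Set.Icc a b))
    (δ : ℝ) (hδ : 0 < δ) :
    |(∑ i, p i * f (y i)) - f x| ≤
      modulus f' a b δ *
        ((∑ i, p i * (y i - x) ^ 2) / δ + Real.sqrt (∑ i, p i * (y i - x) ^ 2)) :=
  discrete_modulus_deriv_estimate_general a b m y p hy hp hpsum x hx f f' hf hf' δ hδ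
end

section
/- If f : [0,1] → ℝ is convex, then for every n > 1 and x ∈ [0,1], R_n(f;x) ≥ f(x), where R_n is the Pólya–Bernstein-type operator with parameters a = x, b = 1−x, c = −min{x,1−x}/(n−1). -/
open Finset

theorem rfac_succ (x h : ℝ) (m : ℕ) : rfac x h (m + 1) = x * rfac (x + h) h m := by
  rw [rfac, prod_range_succ', rfac, mul_comm, Nat.cast_zero, zero_mul, add_zero]
  refine congrArg _ (prod_congr rfl fun i _ => ?_)
  push_cast
  ring

theorem rfac_nonneg {x h : ℝ} {m : ℕ} (hx : ∀ i < m, 0 ≤ x + i * h) : 0 ≤ rfac x h m :=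
  prod_nonneg fun i hi => hx i (mem_range.1 hi)

theorem rfac_pos {x h : ℝ} {m : ℕ} (hx : ∀ i < m, 0 < x + i * h) : 0 < rfac x h m :=
  prod_pos fun i hi => hx i (mem_range.1 hi)

theorem sum_antidiagonal_choose_mul_rfac (a b c : ℝ) (n : ℕ) :
    ∑ ij ∈ antidiagonal n, (n.choose ij.1 : ℝ) * (rfac a c ij.1 * rfac b c ij.2) =
      rfac (a + b) c n := by
  induction n generalizing a b with
  | zero => simp [rfac]
  | succ n ih =>
    have hb : ∑ ij ∈ antidiagonal n,
        (n.choose ij.1 : ℝ) * (rfac a c ij.1 * rfac b c (ij.2 + 1)) =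
          b * rfac (a + b + c) c n := by
      rw [add_assoc, ← ih, mul_sum]
      refine sum_congr rfl fun ij _ => ?_
      rw [rfac_succ]
      ring
    have ha : ∑ ij ∈ antidiagonal n,
        (n.choose ij.2 : ℝ) * (rfac a c (ij.1 + 1) * rfac b c ij.2) =
          a * rfac (a + b + c) c n := by
      rw [add_right_comm, ← ih, mul_sum]
      refine sum_congr rfl fun ij hij => ?_
      rw [rfac_succ, ← Nat.choose_symm_of_eq_add (mem_antidiagonal.1 hij).symm]
      ring
    rw [sum_antidiagonal_choose_succ_mul (fun i j => rfac a c i * rfac b c j), hb, ha, rfac_succ]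
    ring

theorem sum_antidiagonal_mul_choose_mul_rfac (a b c : ℝ) (n : ℕ) :
    ∑ ij ∈ antidiagonal (n + 1),
        (ij.1 : ℝ) * (n + 1).choose ij.1 * (rfac a c ij.1 * rfac b c ij.2) =
      (n + 1) * a * rfac (a + b + c) c n := by
  rw [Nat.sum_antidiagonal_succ, add_right_comm, ← sum_antidiagonal_choose_mul_rfac, mul_sum]
  simp only [Nat.cast_zero, zero_mul, zero_add]
  refine sum_congr rfl fun ij _ => ?_
  have hchoose : ((ij.1 + 1 : ℕ) : ℝ) * (n + 1).choose (ij.1 + 1) = (n + 1) * n.choose ij.1 :=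
    mod_cast (mul_comm _ _).trans (Nat.add_one_mul_choose_eq n ij.1).symm
  rw [rfac_succ, ← mul_assoc, hchoose]
  ring

section PolyaProb

variable {a b c : ℝ} {n : ℕ}

theorem polyaProb_nonneg (ha : ∀ i < n, 0 ≤ a + i * c) (hb : ∀ i < n, 0 ≤ b + i * c)
    (hab : 0 < rfac (a + b) c n) {k : ℕ} (hk : k ≤ n) : 0 ≤ polyaProb a b c n k := by
  have hA : 0 ≤ rfac a c k := rfac_nonneg fun i hi => ha i (hi.trans_le hk)
  have hB : 0 ≤ rfac b c (n - k) := rfac_nonneg fun i hi => hb i (hi.trans_le (n.sub_le k))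
  unfold polyaProb
  positivity

theorem sum_polyaProb (h : rfac (a + b) c n ≠ 0) :
    ∑ k ∈ range (n + 1), polyaProb a b c n k = 1 := by
  have hsum : ∑ k ∈ range (n + 1), (n.choose k : ℝ) * (rfac a c k * rfac b c (n - k)) =
      rfac (a + b) c n :=
    (Nat.sum_antidiagonal_eq_sum_range_succ
      (fun i j => (n.choose i : ℝ) * (rfac a c i * rfac b c j)) n).symm.trans
      (sum_antidiagonal_choose_mul_rfac a b c n)
  simp only [polyaProb, mul_assoc, ← sum_div, hsum, div_self h]

theorem sum_polyaProb_mul_div (hn : 0 < n) (h : rfac (a + b) c n ≠ 0) :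
    ∑ k ∈ range (n + 1), polyaProb a b c n k * (k / n) = a / (a + b) := by
  obtain ⟨m, rfl⟩ := Nat.exists_eq_add_one_of_ne_zero hn.ne'
  have hmoment : ∑ k ∈ range (m + 2),
      (k : ℝ) * (m + 1).choose k * (rfac a c k * rfac b c (m + 1 - k)) =
        (m + 1) * a * rfac (a + b + c) c m :=
    (Nat.sum_antidiagonal_eq_sum_range_succ
      (fun i j => (i : ℝ) * (m + 1).choose i * (rfac a c i * rfac b c j)) (m + 1)).symm.trans
      (sum_antidiagonal_mul_choose_mul_rfac a b c m)
  have hterm : ∀ k : ℕ, polyaProb a b c (m + 1) k * (k / (m + 1 : ℕ)) =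
      k * (m + 1).choose k * (rfac a c k * rfac b c (m + 1 - k)) /
        (rfac (a + b) c (m + 1) * (m + 1)) := by
    intro k
    rw [polyaProb, div_mul_div_comm]
    push_cast
    ring
  rw [rfac_succ] at h
  rw [sum_congr rfl fun k _ => hterm k, ← sum_div, hmoment, rfac_succ]
  field_simp [left_ne_zero_of_mul h, right_ne_zero_of_mul h]

theorem ConvexOn.le_sum_polyaProb_mul {f : ℝ → ℝ} (hf : ConvexOn ℝ (Set.Icc 0 1) f)
    (hn : 0 < n) (ha : ∀ i < n, 0 ≤ a + i * c) (hb : ∀ i < n, 0 ≤ b + i * c)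
    (hab : 0 < rfac (a + b) c n) :
    f (a / (a + b)) ≤ ∑ k ∈ range (n + 1), polyaProb a b c n k * f (k / n) := by
  have hnodes : ∀ k ∈ range (n + 1), (k / n : ℝ) ∈ Set.Icc 0 1 := fun k hk =>
    ⟨by positivity, div_le_one_of_le₀ (by exact_mod_cast Nat.lt_succ_iff.1 (mem_range.1 hk))
      n.cast_nonneg⟩
  have hjensen := hf.map_sum_le
    (fun k hk => polyaProb_nonneg ha hb hab (Nat.lt_succ_iff.1 (mem_range.1 hk)))
    (sum_polyaProb hab.ne') hnodes
  simpa only [smul_eq_mul, sum_polyaProb_mul_div hn hab.ne'] using hjensen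

end PolyaProb

theorem add_mul_neg_div_nonneg {m t N : ℝ} (hm : 0 ≤ m) (ht : 0 ≤ t) (htN : t ≤ N) :
    0 ≤ m + t * (-m / N) := by
  rcases ht.eq_or_lt with rfl | ht
  · simpa using hm
  rw [neg_div, mul_neg, ← sub_eq_add_neg, sub_nonneg, mul_div_assoc',
    div_le_iff₀ (ht.trans_le htN)]
  nlinarith

theorem Rop_ge_of_convex (f : ℝ → ℝ) (hf : ConvexOn ℝ (Set.Icc (0 : ℝ) 1) f)
    (n : ℕ) (hn : 1 < n) (x : ℝ) (hx : x ∈ Set.Icc (0 : ℝ) 1) :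
    f x ≤ Rop n f x := by
  obtain ⟨hx0, hx1⟩ := hx
  have hmx : min x (1 - x) ≤ x := min_le_left _ _
  have hm1x : min x (1 - x) ≤ 1 - x := min_le_right _ _
  have hc : ∀ i < n, 0 ≤ min x (1 - x) + i * (-min x (1 - x) / ((n : ℝ) - 1)) := fun i hi =>
    add_mul_neg_div_nonneg (le_min hx0 (by linarith)) i.cast_nonneg
      (by rw [le_sub_iff_add_le]; exact_mod_cast hi)
  -- `1 + i c = (m + i c) + (1 - m)` with `m = min x (1 - x) ≤ 1/2`
  have hden : 0 < rfac (x + (1 - x)) (-min x (1 - x) / ((n : ℝ) - 1)) n :=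
    rfac_pos fun i hi => by linarith [hc i hi]
  simpa only [Rop, add_sub_cancel, div_one] using
    hf.le_sum_polyaProb_mul (by omega) (fun i hi => by linarith [hc i hi])
      (fun i hi => by linarith [hc i hi]) hden
end

section
/- The function G(x) = x(1−x)(1 − min{x,1−x}) + √(x(1−x)(1 − min{x,1−x})) attains maximum value (4 + 6√3)/27 on [0,1]. -/
lemma sqrt427 : Real.sqrt (4/27) = 6 * Real.sqrt 3 / 27 := by
  have h3 : Real.sqrt 3 ^ 2 = 3 := Real.sq_sqrt (by norm_num)
  have : (6 * Real.sqrt 3 / 27) ^ 2 = 4/27 := by ring_nf; nlinarith [h3]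
  rw [← this, Real.sqrt_sq (by positivity)]

lemma E_le (x : ℝ) (hx : x ∈ Set.Icc (0:ℝ) 1) :
    x * (1 - x) * (1 - min x (1 - x)) ≤ 4/27 := by
  obtain ⟨h0, h1⟩ := hx
  rcases min_cases x (1 - x) with ⟨h, _⟩ | ⟨h, _⟩ <;> rw [h] <;>
    nlinarith [sq_nonneg (x - 1/3), sq_nonneg (x - 2/3), sq_nonneg x, sq_nonneg (1-x)]

theorem G_max :
    (∀ x ∈ Set.Icc (0 : ℝ) 1,
        x * (1 - x) * (1 - min x (1 - x)) +
            Real.sqrt (x * (1 - x) * (1 - min x (1 - x))) ≤ (4 + 6 * Real.sqrt 3) / 27)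
      ∧ ∃ x ∈ Set.Icc (0 : ℝ) 1,
          x * (1 - x) * (1 - min x (1 - x)) +
              Real.sqrt (x * (1 - x) * (1 - min x (1 - x))) = (4 + 6 * Real.sqrt 3) / 27 := by
  constructor
  · intro x hx
    have hE : x * (1 - x) * (1 - min x (1 - x)) ≤ 4/27 := E_le x hx
    have hs : Real.sqrt (x * (1 - x) * (1 - min x (1 - x))) ≤ Real.sqrt (4/27) :=
      Real.sqrt_le_sqrt hE
    rw [sqrt427] at hs
    linarith
  · refine ⟨1/3, by norm_num, ?_⟩
    have hmin : min (1/3 : ℝ) (1 - 1/3) = 1/3 := by norm_num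
    rw [hmin]
    have : (1/3 : ℝ) * (1 - 1/3) * (1 - 1/3) = 4/27 := by norm_num
    rw [this, sqrt427]
    ring
end
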